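/- arXiv:1506.07359 — 2 statements merged into one kernel-verified Lean document; each statement's English description precedes it below -/
import Mathlib

section
/- If the environment model concentrates on a single hidden state, i.e. μ(s*) = 1 for some s* ∈ 𝓢, then causal and action-evidential predictions coincide: for every history æ_{<t} with μ(æ_{<t}) > 0, every action a_t and percept e_t, μ(e_t | æ_{<t}, do(a_t)) = μ(e_t | æ_{<t}a_t); consequently V^{cau,π}_{μ,m}(æ_{<t}) = V^{aev,π}_{μ,m}(æ_{<t}) for every deterministic policy π and every such history. -/
/-! # A framework for physicalistic sequential decision making

Following Everitt, Leike, Hutter, "Sequential Extensions of Causal and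
Evidential Decision Theory".

An environment model `μ` over hidden states `S`, actions `A`, percepts `E`
with lifetime `m` is given in causally factored form
`μ(s, æ_{1:m}) = μ(s) ∏_i μ(a_i | s, æ_{<i}) μ(e_i | s, æ_{<i} a_i)`.
Histories are lists of action-percept pairs. -/

noncomputable section

variable {S A E : Type*}

/-- The product `∏ μ(a_i | s, æ_{<i}) μ(e_i | s, æ_{<i}a_i)` of the factors along the
continuation `rest` of the history-prefix `pre`. -/
def wSuf (pa : S → List (A × E) → A → ℝ) (pe : S → List (A × E) → A → E → ℝ)
    (s : S) : List (A × E) → List (A × E) → ℝ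
  | _, [] => 1
  | pre, (a, e) :: rest => pa s pre a * pe s pre a e * wSuf pa pe s (pre ++ [(a, e)]) rest

/-- A physicalistic environment model with lifetime `m`: a prior pmf on the hidden state,
together with conditional pmfs for the action and the percept at every time step
(i.e. after every history of length `< m`), which is action-positive. -/
structure Env (S A E : Type*) [Fintype S] [Fintype A] [Fintype E] (m : ℕ) where
  /-- the prior `μ(s)` over the hidden state -/
  prior : S → ℝ
  /-- the action factor `μ(a_t | s, æ_{<t})` -/
  pa : S → List (A × E) → A → ℝ
  /-- the percept factor `μ(e_t | s, æ_{<t}a_t)` -/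
  pe : S → List (A × E) → A → E → ℝ
  prior_nonneg : ∀ s, 0 ≤ prior s
  prior_sum : ∑ s, prior s = 1
  pa_nonneg : ∀ s h a, 0 ≤ pa s h a
  pa_sum : ∀ s (h : List (A × E)), h.length < m → ∑ a, pa s h a = 1
  pe_nonneg : ∀ s h a e, 0 ≤ pe s h a e
  pe_sum : ∀ s (h : List (A × E)) (a : A), h.length < m → ∑ e, pe s h a e = 1
  /-- action-positivity: `μ(æ_{<t} | s) > 0` implies `μ(a_t | s, æ_{<t}) > 0` -/
  action_pos : ∀ s (h : List (A × E)) (a : A), h.length < m →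
    0 < wSuf pa pe s [] h → 0 < pa s h a

variable [Fintype S] [Fintype A] [Fintype E] {m : ℕ}

/-- Event: the trajectory `τ = æ_{1:m}` extends the history `h = æ_{<t}`. -/
def ExtendsH (h : List (A × E)) (τ : Fin m → A × E) : Prop :=
  (List.ofFn τ).take h.length = h

/-- Event: the actions of the trajectory `τ` from (0-based) time `t0` on follow
the deterministic policy `π`. -/
def FollowsFrom (π : List (A × E) → A) (t0 : ℕ) (τ : Fin m → A × E) : Prop :=
  ∀ i : Fin m, t0 ≤ (i : ℕ) → (τ i).1 = π ((List.ofFn τ).take (i : ℕ))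

/-- Event: the action at (0-based) time `k` is `a`. -/
def ActAt (k : ℕ) (a : A) (τ : Fin m → A × E) : Prop :=
  ∀ hk : k < m, (τ ⟨k, hk⟩).1 = a

/-- Event: the percept at (0-based) time `k` is `e`. -/
def PerAt (k : ℕ) (e : E) (τ : Fin m → A × E) : Prop :=
  ∀ hk : k < m, (τ ⟨k, hk⟩).2 = e

namespace Env

/-- The joint probability `μ(s, æ_{<t})`, given directly by the causal factorization. -/
def hw (μ : Env S A E m) (s : S) (h : List (A × E)) : ℝ :=
  μ.prior s * wSuf μ.pa μ.pe s [] h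

/-- The marginal probability `μ(æ_{<t})` of a history. -/
def probH (μ : Env S A E m) (h : List (A × E)) : ℝ := ∑ s, μ.hw s h

/-- The probability `μ(æ_{<t}a_t)` of a history followed by an action. -/
def probHA (μ : Env S A E m) (h : List (A × E)) (a : A) : ℝ :=
  ∑ s, μ.hw s h * μ.pa s h a

/-- The action-evidential conditional `μ(e_t | æ_{<t}a_t)`. -/
def condE (μ : Env S A E m) (h : List (A × E)) (a : A) (e : E) : ℝ :=
  μ.probH (h ++ [(a, e)]) / μ.probHA h a

/-- The posterior `μ(s | æ_{<t})` over the hidden state. -/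
def condS (μ : Env S A E m) (s : S) (h : List (A × E)) : ℝ :=
  μ.hw s h / μ.probH h

/-- The posterior `μ(s | æ_{<t}a_t)` over the hidden state, also conditioning on `a_t`. -/
def condSA (μ : Env S A E m) (s : S) (h : List (A × E)) (a : A) : ℝ :=
  μ.hw s h * μ.pa s h a / μ.probHA h a

/-- The conditional `μ(e_t | s, æ_{<t}a_t)` given the hidden state. -/
def condESA (μ : Env S A E m) (s : S) (h : List (A × E)) (a : A) (e : E) : ℝ :=
  μ.hw s (h ++ [(a, e)]) / (μ.hw s h * μ.pa s h a)

/-! ## Causal interventions -/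

/-- The intervened joint `μ(s, æ_{<t}, e_t | do(a_t := b))`: the action factor at time `t`
is deleted and `a_t` is substituted by `b`. -/
def doJoint (μ : Env S A E m) (s : S) (h : List (A × E)) (b : A) (e : E) : ℝ :=
  μ.hw s h * μ.pe s h b e

/-- `μ(æ_{<t}, e_t | do(a_t := b))`, marginalizing the hidden state. -/
def doNum (μ : Env S A E m) (h : List (A × E)) (b : A) (e : E) : ℝ :=
  ∑ s, μ.doJoint s h b e

/-- `μ(æ_{<t} | do(a_t := b))`, marginalizing the hidden state and the percept `e_t`. -/
def doDen (μ : Env S A E m) (h : List (A × E)) (b : A) : ℝ :=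
  ∑ e, μ.doNum h b e

/-- The causal conditional `μ(e_t | æ_{<t}, do(a_t := b))`. -/
def condDo (μ : Env S A E m) (h : List (A × E)) (b : A) (e : E) : ℝ :=
  μ.doNum h b e / μ.doDen h b

/-- Product of the percept factors along the percepts `es`, all action factors being
deleted and the actions substituted according to the policy `π`:
the intervened conditional `μ(e_{t:k} | s, æ_{<t}, do(a_t := π(æ_{<t}), …))`. -/
def doPE (μ : Env S A E m) (π : List (A × E) → A) (s : S) :
    List (A × E) → List E → ℝ
  | _, [] => 1
  | h, e :: es => μ.pe s h (π h) e * μ.doPE π s (h ++ [(π h, e)]) es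

/-- `μ(æ_{<t}, e_{t:k} | do(a_t := π(æ_{<t}), …, a_m := π(æ_{<m})))` where the percepts
`e_{t:k}` are given by the list `es`. -/
def doPolNum (μ : Env S A E m) (π : List (A × E) → A) (h : List (A × E))
    (es : List E) : ℝ :=
  ∑ s, μ.hw s h * μ.doPE π s h es

/-- `μ(æ_{<t} | do(a_t := π(æ_{<t}), …, a_m := π(æ_{<m})))`, marginalizing all the
intervened percepts `e_{t:m}`. -/
def doPolDen (μ : Env S A E m) (π : List (A × E) → A) (h : List (A × E)) : ℝ :=
  ∑ es : Fin (m - h.length) → E, μ.doPolNum π h (List.ofFn es)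

/-! ## Probabilities of trajectory events -/

open Classical in
/-- The probability of an event `Q` over full trajectories `æ_{1:m}`. -/
def evP (μ : Env S A E m) (Q : (Fin m → A × E) → Prop) : ℝ :=
  ∑ τ : Fin m → A × E, if Q τ then μ.probH (List.ofFn τ) else 0

open Classical in
/-- The joint probability of the hidden state `s` and an event `Q` over full
trajectories `æ_{1:m}`. -/
def evPS (μ : Env S A E m) (s : S) (Q : (Fin m → A × E) → Prop) : ℝ :=
  ∑ τ : Fin m → A × E, if Q τ then μ.hw s (List.ofFn τ) else 0

/-- The policy-evidential conditional `μ(e_t | æ_{<t}, π_{t:m})`, conditioning on the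
event that the history extends `æ_{<t}` and the actions from time `t` to `m` follow `π`. -/
def condPev (μ : Env S A E m) (π : List (A × E) → A) (h : List (A × E)) (e : E) : ℝ :=
  μ.evP (fun τ => ExtendsH h τ ∧ FollowsFrom π h.length τ ∧ PerAt h.length e τ) /
    μ.evP (fun τ => ExtendsH h τ ∧ FollowsFrom π h.length τ)

/-- The posterior `μ(s | æ_{<t}, π_{t:m})` over the hidden state given the policy event. -/
def condSPev (μ : Env S A E m) (π : List (A × E) → A) (s : S) (h : List (A × E)) : ℝ :=
  μ.evPS s (fun τ => ExtendsH h τ ∧ FollowsFrom π h.length τ) /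
    μ.evP (fun τ => ExtendsH h τ ∧ FollowsFrom π h.length τ)

/-- The conditional `μ(e_t | s, æ_{<t}, π_{t:m})` given the hidden state and the
policy event. -/
def condESPev (μ : Env S A E m) (π : List (A × E) → A) (s : S) (h : List (A × E))
    (e : E) : ℝ :=
  μ.evPS s (fun τ => ExtendsH h τ ∧ FollowsFrom π h.length τ ∧ PerAt h.length e τ) /
    μ.evPS s (fun τ => ExtendsH h τ ∧ FollowsFrom π h.length τ)

/-- The conditional `μ(e_t | æ_{<t}a_t, π_{t+1:m})` used in the recursive definition of
the policy-evidential value. -/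
def condPevA (μ : Env S A E m) (π : List (A × E) → A) (h : List (A × E)) (a : A)
    (e : E) : ℝ :=
  μ.evP (fun τ => ExtendsH (h ++ [(a, e)]) τ ∧ FollowsFrom π (h.length + 1) τ) /
    μ.evP (fun τ => ExtendsH h τ ∧ ActAt h.length a τ ∧ FollowsFrom π (h.length + 1) τ)

/-! ## Value functions

The recursions are driven by the fuel `n`, the number of remaining time steps: the
value of a history `æ_{<t}` (for `t ≤ m + 1`) or of `æ_{<t}a_t` (for `t ≤ m`) within
lifetime `m` uses fuel `n = m - (t - 1)`, and the value is `0` for `t > m`. -/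

/-- The action-evidential value `V^{aev,π}_{μ}(æ_{<t}a_t)` (with `n = m - t + 1`):
`V^{aev,π}(æ_{<t}a_t) = ∑_{e_t} μ(e_t | æ_{<t}a_t) (u(e_t) + V^{aev,π}(æ_{<t}a_te_t))`. -/
def VaevA (μ : Env S A E m) (u : E → ℝ) (π : List (A × E) → A) :
    ℕ → List (A × E) → A → ℝ
  | 0, _, _ => 0
  | n + 1, h, a =>
    ∑ e, μ.condE h a e * (u e + μ.VaevA u π n (h ++ [(a, e)]) (π (h ++ [(a, e)])))

/-- The action-evidential value of a history, `V^{aev,π}(æ_{<t}) = V^{aev,π}(æ_{<t}π(æ_{<t}))`. -/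
def Vaev (μ : Env S A E m) (u : E → ℝ) (π : List (A × E) → A) (n : ℕ)
    (h : List (A × E)) : ℝ :=
  μ.VaevA u π n h (π h)

/-- The policy-evidential value `V^{pev,π}_{μ}(æ_{<t}a_t)` (with `n = m - t + 1`):
`V^{pev,π}(æ_{<t}a_t) = ∑_{e_t} μ(e_t | æ_{<t}a_t, π_{t+1:m}) (u(e_t) + V^{pev,π}(æ_{<t}a_te_t))`. -/
def VpevA (μ : Env S A E m) (u : E → ℝ) (π : List (A × E) → A) :
    ℕ → List (A × E) → A → ℝ
  | 0, _, _ => 0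
  | n + 1, h, a =>
    ∑ e, μ.condPevA π h a e * (u e + μ.VpevA u π n (h ++ [(a, e)]) (π (h ++ [(a, e)])))

/-- The policy-evidential value of a history. -/
def Vpev (μ : Env S A E m) (u : E → ℝ) (π : List (A × E) → A) (n : ℕ)
    (h : List (A × E)) : ℝ :=
  μ.VpevA u π n h (π h)

/-- The causal value `V^{cau,π}_{μ}(æ_{<t}a_t)` (with `n = m - t + 1`):
`V^{cau,π}(æ_{<t}a_t) = ∑_{e_t} μ(e_t | æ_{<t}, do(a_t)) (u(e_t) + V^{cau,π}(æ_{<t}a_te_t))`. -/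
def VcauA (μ : Env S A E m) (u : E → ℝ) (π : List (A × E) → A) :
    ℕ → List (A × E) → A → ℝ
  | 0, _, _ => 0
  | n + 1, h, a =>
    ∑ e, μ.condDo h a e * (u e + μ.VcauA u π n (h ++ [(a, e)]) (π (h ++ [(a, e)])))

/-- The causal value of a history. -/
def Vcau (μ : Env S A E m) (u : E → ℝ) (π : List (A × E) → A) (n : ℕ)
    (h : List (A × E)) : ℝ :=
  μ.VcauA u π n h (π h)

/-! ## Products of one-step conditionals, for the iterative forms -/

/-- `∏_{i=t}^{k} μ(e_i | æ_{<i}a_i)` with `a_i := π(æ_{<i})`, the percepts `e_{t:k}`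
being given by the list `es`. -/
def prodAev (μ : Env S A E m) (π : List (A × E) → A) : List (A × E) → List E → ℝ
  | _, [] => 1
  | h, e :: es => μ.condE h (π h) e * μ.prodAev π (h ++ [(π h, e)]) es

/-- `∏_{i=t}^{k} μ(e_i | æ_{<i}, π_{i:m})`. -/
def prodPev (μ : Env S A E m) (π : List (A × E) → A) : List (A × E) → List E → ℝ
  | _, [] => 1
  | h, e :: es => μ.condPev π h e * μ.prodPev π (h ++ [(π h, e)]) es

/-- `∏_{i=t}^{k} μ(e_i | æ_{<i}, do(a_i))` with `a_i := π(æ_{<i})`. -/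
def prodCau (μ : Env S A E m) (π : List (A × E) → A) : List (A × E) → List E → ℝ
  | _, [] => 1
  | h, e :: es => μ.condDo h (π h) e * μ.prodCau π (h ++ [(π h, e)]) es

/-- `∏_{i=t}^{k} ∑_{s} μ(s | æ_{<i}) μ(e_i | s, æ_{<i}a_i)` with `a_i := π(æ_{<i})`. -/
def prodCauX (μ : Env S A E m) (π : List (A × E) → A) : List (A × E) → List E → ℝ
  | _, [] => 1
  | h, e :: es =>
    (∑ s, μ.condS s h * μ.condESA s h (π h) e) * μ.prodCauX π (h ++ [(π h, e)]) es

end Env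

end

section Aux

variable {S A E : Type*}

lemma wSuf_nonneg (pa : S → List (A × E) → A → ℝ) (pe : S → List (A × E) → A → E → ℝ)
    (hpa : ∀ s h a, 0 ≤ pa s h a) (hpe : ∀ s h a e, 0 ≤ pe s h a e) (s : S) :
    ∀ (rest pre : List (A × E)), 0 ≤ wSuf pa pe s pre rest
  | [], _ => by simp [wSuf]
  | (a, e) :: rest, pre => by
    simp only [wSuf]
    exact mul_nonneg (mul_nonneg (hpa _ _ _) (hpe _ _ _ _))
      (wSuf_nonneg pa pe hpa hpe s rest (pre ++ [(a, e)]))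

lemma wSuf_snoc (pa : S → List (A × E) → A → ℝ) (pe : S → List (A × E) → A → E → ℝ)
    (s : S) : ∀ (rest pre : List (A × E)) (a : A) (e : E),
    wSuf pa pe s pre (rest ++ [(a, e)]) =
      wSuf pa pe s pre rest * (pa s (pre ++ rest) a * pe s (pre ++ rest) a e)
  | [], pre, a, e => by simp [wSuf]
  | (b, f) :: rest, pre, a, e => by
    simp only [List.cons_append, wSuf, List.append_eq]
    rw [wSuf_snoc pa pe s rest (pre ++ [(b, f)]) a e]
    simp only [List.append_assoc, List.singleton_append]
    ring

variable [Fintype S] [Fintype A] [Fintype E] {m : ℕ}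

lemma Env.hw_snoc (μ : Env S A E m) (s : S) (h : List (A × E)) (a : A) (e : E) :
    μ.hw s (h ++ [(a, e)]) = μ.hw s h * μ.pa s h a * μ.pe s h a e := by
  simp only [Env.hw, wSuf_snoc μ.pa μ.pe s h [] a e, List.nil_append]
  ring

lemma prior_eq_zero (μ : Env S A E m) (sstar : S) (hstar : μ.prior sstar = 1)
    (s : S) (hs : s ≠ sstar) : μ.prior s = 0 := by
  classical
  have h1 := μ.prior_sum
  have h2 : ∑ t ∈ Finset.univ.erase sstar, μ.prior t = 0 := by
    have := Finset.add_sum_erase Finset.univ μ.prior (Finset.mem_univ sstar)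
    rw [← this, hstar] at h1
    linarith
  have h3 : ∀ t ∈ Finset.univ.erase sstar, μ.prior t = 0 :=
    (Finset.sum_eq_zero_iff_of_nonneg (fun t _ => μ.prior_nonneg t)).mp h2
  exact h3 s (Finset.mem_erase.mpr ⟨hs, Finset.mem_univ s⟩)

lemma hw_eq_zero (μ : Env S A E m) (sstar : S) (hstar : μ.prior sstar = 1)
    (s : S) (hs : s ≠ sstar) (h : List (A × E)) : μ.hw s h = 0 := by
  simp [Env.hw, prior_eq_zero μ sstar hstar s hs]

lemma probH_eq (μ : Env S A E m) (sstar : S) (hstar : μ.prior sstar = 1)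
    (h : List (A × E)) : μ.probH h = μ.hw sstar h := by
  rw [Env.probH]
  exact Finset.sum_eq_single sstar
    (fun s _ hs => hw_eq_zero μ sstar hstar s hs h) (by simp)

lemma pa_pos (μ : Env S A E m) (sstar : S) (hstar : μ.prior sstar = 1)
    (h : List (A × E)) (a : A) (hlen : h.length < m) (hpos : 0 < μ.probH h) :
    0 < μ.pa sstar h a := by
  apply μ.action_pos sstar h a hlen
  have := probH_eq μ sstar hstar h
  rw [this, Env.hw, hstar, one_mul] at hpos
  exact hpos

lemma hw_pos (μ : Env S A E m) (sstar : S) (hstar : μ.prior sstar = 1)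
    (h : List (A × E)) (hpos : 0 < μ.probH h) : 0 < μ.hw sstar h := by
  rwa [probH_eq μ sstar hstar h] at hpos

lemma condE_eq_pe (μ : Env S A E m) (sstar : S) (hstar : μ.prior sstar = 1)
    (h : List (A × E)) (a : A) (e : E) (hlen : h.length < m) (hpos : 0 < μ.probH h) :
    μ.condE h a e = μ.pe sstar h a e := by
  have hhw := hw_pos μ sstar hstar h hpos
  have hpa := pa_pos μ sstar hstar h a hlen hpos
  have hA : μ.probHA h a = μ.hw sstar h * μ.pa sstar h a := by
    rw [Env.probHA]
    exact Finset.sum_eq_single sstar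
      (fun s _ hs => by simp [hw_eq_zero μ sstar hstar s hs]) (by simp)
  rw [Env.condE, probH_eq μ sstar hstar, hA, Env.hw_snoc]
  field_simp

lemma condDo_eq_pe (μ : Env S A E m) (sstar : S) (hstar : μ.prior sstar = 1)
    (h : List (A × E)) (a : A) (e : E) (hlen : h.length < m) (hpos : 0 < μ.probH h) :
    μ.condDo h a e = μ.pe sstar h a e := by
  have hhw := hw_pos μ sstar hstar h hpos
  have hN : ∀ e', μ.doNum h a e' = μ.hw sstar h * μ.pe sstar h a e' := by
    intro e'
    rw [Env.doNum]
    exact Finset.sum_eq_single sstar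
      (fun s _ hs => by simp [Env.doJoint, hw_eq_zero μ sstar hstar s hs]) (by simp [Env.doJoint])
  have hD : μ.doDen h a = μ.hw sstar h := by
    simp only [Env.doDen, hN, ← Finset.mul_sum, μ.pe_sum sstar h a hlen, mul_one]
  rw [Env.condDo, hN, hD]
  field_simp

end Aux

/-- **A single hidden state renders SCDT and SAEDT equivalent**: if `μ(s*) = 1` for some
hidden state `s*`, then `μ(e_t | æ_{<t}, do(a_t)) = μ(e_t | æ_{<t}a_t)` for every history
`æ_{<t}` of positive probability, every action `a_t` and percept `e_t`; consequently
`V^{cau,π}_{μ,m}(æ_{<t}) = V^{aev,π}_{μ,m}(æ_{<t})` for every deterministic policy `π`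
and every such history. -/
theorem single_hidden_state_causal_eq_action_evidential
    {S A E : Type*} [Fintype S] [Fintype A] [Fintype E] {m : ℕ}
    (μ : Env S A E m) (sstar : S) (hstar : μ.prior sstar = 1) :
    (∀ (h : List (A × E)) (a : A) (e : E), h.length < m → 0 < μ.probH h →
        μ.condDo h a e = μ.condE h a e) ∧
    ∀ (u : E → ℝ), (∀ e, 0 ≤ u e ∧ u e ≤ 1) →
      ∀ (π : List (A × E) → A) (h : List (A × E)), h.length ≤ m → 0 < μ.probH h →
        μ.Vcau u π (m - h.length) h = μ.Vaev u π (m - h.length) h := by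
  constructor
  · intro h a e hlen hpos
    rw [condDo_eq_pe μ sstar hstar h a e hlen hpos,
      condE_eq_pe μ sstar hstar h a e hlen hpos]
  · intro u _ π
    suffices key : ∀ (n : ℕ) (h : List (A × E)), h.length + n = m → 0 < μ.probH h →
        μ.Vcau u π n h = μ.Vaev u π n h by
      intro h hle hpos
      exact key (m - h.length) h (by omega) hpos
    intro n
    induction n with
    | zero => intro h _ _; rfl
    | succ n ih =>
      intro h hlen hpos
      have hlt : h.length < m := by omega
      show μ.VcauA u π (n + 1) h (π h) = μ.VaevA u π (n + 1) h (π h)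
      rw [Env.VcauA, Env.VaevA]
      apply Finset.sum_congr rfl
      intro e _
      set a := π h
      rw [condDo_eq_pe μ sstar hstar h a e hlt hpos,
        condE_eq_pe μ sstar hstar h a e hlt hpos]
      rcases (μ.pe_nonneg sstar h a e).eq_or_lt with hz | hp
      · rw [← hz]; ring
      · congr 1
        congr 1
        have hpos' : 0 < μ.probH (h ++ [(a, e)]) := by
          rw [probH_eq μ sstar hstar, Env.hw_snoc]
          exact mul_pos (mul_pos (hw_pos μ sstar hstar h hpos)
            (pa_pos μ sstar hstar h a hlt hpos)) hp
        exact ih (h ++ [(a, e)]) (by simp; omega) hpos'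
end

section
/- In the sequential toxoplasmosis environment, the two-step action-evidential values from the empty history are V^{aev,π₁}_{μ,2} = −30/7 for the policy π₁ (no doctor, never pet) and V^{aev,π₂}_{μ,2} = −4 for the policy π₂ (see the doctor); hence V^{aev,π₁}_{μ,2} < V^{aev,π₂}_{μ,2}, i.e. SAEDT strictly prefers seeing the doctor. -/
/-! ## The sequential toxoplasmosis environment (lifetime m = 2)

Hidden states `T` (infected) / `H` (healthy), prior 1/2 each. At step 1 the agent
chooses `Y` (see the doctor) or `N` (don't); seeing the doctor gives percept `C`
(utility −4). Otherwise an infected agent meets a kitten `K` with probability 0.2 and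
gets sick `Sick` (utility −10) with probability 0.8, while a healthy agent meets the
kitten with probability 1. After `N₁K` the agent pets (`Y`) with probability 0.8 if
infected and 0.2 if healthy; petting while infected gives `SickPet` (−9), not petting
while infected gives `Sick` (−10), petting while healthy gives `Pet` (+1), otherwise
`Z` (0). All remaining action probabilities are uniform (1/2) and all remaining
percepts are `Z` (utility 0). -/

/-- Hidden states: infected (`T`) or healthy (`H`). -/
inductive TSt | T | H
  deriving DecidableEq

instance instFintypeTSt : Fintype TSt :=
  ⟨{TSt.T, TSt.H}, by intro x; cases x <;> simp⟩

/-- Actions: `Y` (see the doctor / pet the kitten) or `N`. -/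
inductive TAct | Y | N
  deriving DecidableEq

instance instFintypeTAct : Fintype TAct :=
  ⟨{TAct.Y, TAct.N}, by intro x; cases x <;> simp⟩

/-- Percepts: cured (`C`), kitten (`K`), sick not petting (`Sick`), sick petting
(`SickPet`), healthy petting (`Pet`), neutral (`Z`). -/
inductive TPer | C | K | Sick | SickPet | Pet | Z
  deriving DecidableEq

instance instFintypeTPer : Fintype TPer :=
  ⟨{TPer.C, TPer.K, TPer.Sick, TPer.SickPet, TPer.Pet, TPer.Z}, by intro x; cases x <;> simp⟩

/-- The action factors `μ(a_t | s, æ_{<t})` of the sequential toxoplasmosis problem. -/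
noncomputable def toxPa : TSt → List (TAct × TPer) → TAct → ℝ
  | TSt.T, [(TAct.N, TPer.K)], TAct.Y => 0.8
  | TSt.T, [(TAct.N, TPer.K)], TAct.N => 0.2
  | TSt.H, [(TAct.N, TPer.K)], TAct.Y => 0.2
  | TSt.H, [(TAct.N, TPer.K)], TAct.N => 0.8
  | _, _, _ => 1 / 2

/-- The percept factors `μ(e_t | s, æ_{<t}a_t)` of the sequential toxoplasmosis problem. -/
noncomputable def toxPe : TSt → List (TAct × TPer) → TAct → TPer → ℝ
  | _, [], TAct.Y, TPer.C => 1
  | _, [], TAct.Y, _ => 0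
  | TSt.T, [], TAct.N, TPer.K => 0.2
  | TSt.T, [], TAct.N, TPer.Sick => 0.8
  | TSt.T, [], TAct.N, _ => 0
  | TSt.H, [], TAct.N, TPer.K => 1
  | TSt.H, [], TAct.N, _ => 0
  | TSt.T, [(TAct.N, TPer.K)], TAct.Y, TPer.SickPet => 1
  | TSt.T, [(TAct.N, TPer.K)], TAct.Y, _ => 0
  | TSt.T, [(TAct.N, TPer.K)], TAct.N, TPer.Sick => 1
  | TSt.T, [(TAct.N, TPer.K)], TAct.N, _ => 0
  | TSt.H, [(TAct.N, TPer.K)], TAct.Y, TPer.Pet => 1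
  | TSt.H, [(TAct.N, TPer.K)], TAct.Y, _ => 0
  | TSt.H, [(TAct.N, TPer.K)], TAct.N, TPer.Z => 1
  | TSt.H, [(TAct.N, TPer.K)], TAct.N, _ => 0
  | _, _, _, TPer.Z => 1
  | _, _, _, _ => 0

/-- The sequential toxoplasmosis environment model, lifetime `m = 2`. -/
noncomputable def toxEnv : Env TSt TAct TPer 2 where
  prior := fun _ => 1 / 2
  pa := toxPa
  pe := toxPe
  prior_nonneg := by intro s; norm_num
  prior_sum := by
    rw [show (Finset.univ : Finset TSt) = {TSt.T, TSt.H} by decide,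
      Finset.sum_insert (by decide), Finset.sum_singleton]
    norm_num
  pa_nonneg := by intro s h a; unfold toxPa; split <;> norm_num
  pa_sum := by
    intro s h hlen
    rw [show (Finset.univ : Finset TAct) = {TAct.Y, TAct.N} by decide,
      Finset.sum_insert (by decide), Finset.sum_singleton]
    rcases h with _ | ⟨⟨a1, e1⟩, _ | ⟨p, t⟩⟩
    · cases s <;> norm_num [toxPa]
    · cases s <;> cases a1 <;> cases e1 <;> norm_num [toxPa]
    · simp only [List.length_cons] at hlen; omega
  pe_nonneg := by intro s h a e; unfold toxPe; split <;> norm_num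
  pe_sum := by
    intro s h a hlen
    rw [show (Finset.univ : Finset TPer) =
        {TPer.C, TPer.K, TPer.Sick, TPer.SickPet, TPer.Pet, TPer.Z} by decide,
      Finset.sum_insert (by decide), Finset.sum_insert (by decide),
      Finset.sum_insert (by decide), Finset.sum_insert (by decide),
      Finset.sum_insert (by decide), Finset.sum_singleton]
    rcases h with _ | ⟨⟨a1, e1⟩, _ | ⟨p, t⟩⟩
    · cases s <;> cases a <;> norm_num [toxPe]
    · cases s <;> cases a <;> cases a1 <;> cases e1 <;> norm_num [toxPe]
    · simp only [List.length_cons] at hlen; omega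
  action_pos := by
    intro s h a hlen hpos
    unfold toxPa; split <;> norm_num

/-- The utility function of the sequential toxoplasmosis problem. -/
noncomputable def toxU : TPer → ℝ
  | TPer.C => -4
  | TPer.K => 0
  | TPer.Sick => -10
  | TPer.SickPet => -9
  | TPer.Pet => 1
  | TPer.Z => 0

/-- The policy `π₁`: don't see the doctor, never pet the kitten. -/
def toxPi1 : List (TAct × TPer) → TAct := fun _ => TAct.N

/-- The policy `π₂`: see the doctor (the step-2 action is irrelevant). -/
def toxPi2 : List (TAct × TPer) → TAct
  | [] => TAct.Y
  | _ => TAct.N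

/-! The action-evidential predictive `μ(e | æ_{<t}a_t)` is the posterior mixture
`∑_s μ(s | æ_{<t}a_t) μ(e | s, æ_{<t}a_t)`. Without the doctor the first percept is `K` with
probability 3/5 and `Sick` with probability 2/5. After `N₁K`, choosing not to pet is evidence of
health: the posterior of `T` given `N₁K N₂` is `(0.2 · 0.2) / (0.2 · 0.2 + 1 · 0.8) = 1/21`, so the
second step is worth `-10/21` and `V^{aev,π₁} = 3/5 · (-10/21) + 2/5 · (-10) = -30/7`, whereas the
doctor costs `-4` for sure. -/

theorem wSuf_append_singleton {S A E : Type*} (pa : S → List (A × E) → A → ℝ)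
    (pe : S → List (A × E) → A → E → ℝ) (s : S) (pre h : List (A × E)) (a : A) (e : E) :
    wSuf pa pe s pre (h ++ [(a, e)]) =
      wSuf pa pe s pre h * (pa s (pre ++ h) a * pe s (pre ++ h) a e) := by
  induction h generalizing pre with
  | nil => simp [wSuf]
  | cons p h ih =>
    obtain ⟨a', e'⟩ := p
    simp only [List.cons_append, wSuf, ih, List.append_assoc, List.nil_append]
    ring

namespace Env

variable {S A E : Type*} [Fintype S] [Fintype A] [Fintype E] {m : ℕ} (μ : Env S A E m)

theorem hw_append_singleton (s : S) (h : List (A × E)) (a : A) (e : E) :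
    μ.hw s (h ++ [(a, e)]) = μ.hw s h * μ.pa s h a * μ.pe s h a e := by
  simp only [hw, wSuf_append_singleton, List.nil_append]
  ring

theorem condE_eq_sum_condSA_mul_pe (h : List (A × E)) (a : A) (e : E) :
    μ.condE h a e = ∑ s, μ.condSA s h a * μ.pe s h a e := by
  simp only [condE, condSA, probH, hw_append_singleton, div_mul_eq_mul_div, ← Finset.sum_div]

theorem VaevA_one (u : E → ℝ) (π : List (A × E) → A) (h : List (A × E)) (a : A) :
    μ.VaevA u π 1 h a = ∑ s, μ.condSA s h a * ∑ e, μ.pe s h a e * u e := by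
  simp only [VaevA, add_zero, condE_eq_sum_condSA_mul_pe, Finset.sum_mul, Finset.mul_sum]
  rw [Finset.sum_comm]
  simp only [mul_assoc]

end Env

theorem TSt.sum_univ (f : TSt → ℝ) : ∑ s, f s = f TSt.T + f TSt.H := by
  rw [show (Finset.univ : Finset TSt) = {TSt.T, TSt.H} by decide,
    Finset.sum_insert (by decide), Finset.sum_singleton]

theorem TPer.sum_univ (f : TPer → ℝ) : ∑ e, f e =
    f TPer.C + f TPer.K + f TPer.Sick + f TPer.SickPet + f TPer.Pet + f TPer.Z := by
  rw [show (Finset.univ : Finset TPer) =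
      {TPer.C, TPer.K, TPer.Sick, TPer.SickPet, TPer.Pet, TPer.Z} by decide,
    Finset.sum_insert (by decide), Finset.sum_insert (by decide),
    Finset.sum_insert (by decide), Finset.sum_insert (by decide),
    Finset.sum_insert (by decide), Finset.sum_singleton]
  ring

theorem toxEnv_pe : toxEnv.pe = toxPe := rfl

theorem toxEnv_condSA_nil (s : TSt) (a : TAct) : toxEnv.condSA s [] a = 1 / 2 := by
  simp only [Env.condSA, Env.probHA, Env.hw, TSt.sum_univ, toxEnv, toxPa, wSuf]
  norm_num

theorem toxEnv_condE_nil (a : TAct) (e : TPer) :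
    toxEnv.condE [] a e = (toxPe TSt.T [] a e + toxPe TSt.H [] a e) / 2 := by
  rw [Env.condE_eq_sum_condSA_mul_pe, TSt.sum_univ]
  simp only [toxEnv_condSA_nil, toxEnv_pe]
  ring

theorem toxEnv_condSA_after_kitten :
    toxEnv.condSA TSt.T [(TAct.N, TPer.K)] TAct.N = 1 / 21 ∧
      toxEnv.condSA TSt.H [(TAct.N, TPer.K)] TAct.N = 20 / 21 := by
  simp only [Env.condSA, Env.probHA, Env.hw, TSt.sum_univ, toxEnv, toxPa, toxPe, wSuf]
  norm_num

theorem toxPe_of_ne_kitten (s : TSt) (a₁ a : TAct) (e₁ e : TPer)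
    (h : (a₁, e₁) ≠ (TAct.N, TPer.K)) :
    toxPe s [(a₁, e₁)] a e = if e = TPer.Z then 1 else 0 := by
  cases s <;> cases a₁ <;> cases e₁ <;> cases a <;> cases e <;> simp_all [toxPe]

theorem toxEnv_VaevA_one_of_ne_kitten (π : List (TAct × TPer) → TAct) (a₁ a : TAct) (e₁ : TPer)
    (h : (a₁, e₁) ≠ (TAct.N, TPer.K)) : toxEnv.VaevA toxU π 1 [(a₁, e₁)] a = 0 := by
  simp [Env.VaevA_one, toxEnv_pe, toxPe_of_ne_kitten _ _ _ _ _ h, toxU]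

theorem toxEnv_VaevA_one_after_kitten (π : List (TAct × TPer) → TAct) :
    toxEnv.VaevA toxU π 1 [(TAct.N, TPer.K)] TAct.N = -(10 / 21) := by
  rw [Env.VaevA_one, TSt.sum_univ, toxEnv_condSA_after_kitten.1, toxEnv_condSA_after_kitten.2]
  simp only [TPer.sum_univ, toxEnv_pe, toxPe, toxU]
  norm_num

theorem toxEnv_Vaev_toxPi1 : toxEnv.Vaev toxU toxPi1 2 [] = -(30 / 7) := by
  have hsick : toxEnv.VaevA toxU toxPi1 1 [(TAct.N, TPer.Sick)] TAct.N = 0 :=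
    toxEnv_VaevA_one_of_ne_kitten _ _ _ _ (by simp)
  rw [Env.Vaev, Env.VaevA]
  simp only [toxPi1, List.nil_append, TPer.sum_univ, toxEnv_condE_nil,
    toxEnv_VaevA_one_after_kitten, hsick]
  norm_num [toxPe, toxU]

theorem toxEnv_Vaev_toxPi2 : toxEnv.Vaev toxU toxPi2 2 [] = -4 := by
  have hC : toxEnv.VaevA toxU toxPi2 1 [(TAct.Y, TPer.C)] TAct.N = 0 :=
    toxEnv_VaevA_one_of_ne_kitten _ _ _ _ (by simp)
  rw [Env.Vaev, Env.VaevA]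
  simp only [toxPi2, List.nil_append, TPer.sum_univ, toxEnv_condE_nil, hC]
  norm_num [toxPe, toxU]

/-- **Sequential toxoplasmosis, action-evidential values**: from the empty history,
`V^{aev,π₁}_{μ,2} = -30/7` (no doctor, never pet) and `V^{aev,π₂}_{μ,2} = -4` (see the
doctor); hence SAEDT strictly prefers seeing the doctor. -/
theorem sequential_toxoplasmosis_action_evidential :
    toxEnv.Vaev toxU toxPi1 2 [] = -(30 / 7) ∧
    toxEnv.Vaev toxU toxPi2 2 [] = -4 ∧
    toxEnv.Vaev toxU toxPi1 2 [] < toxEnv.Vaev toxU toxPi2 2 [] := by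
  refine ⟨toxEnv_Vaev_toxPi1, toxEnv_Vaev_toxPi2, ?_⟩
  rw [toxEnv_Vaev_toxPi1, toxEnv_Vaev_toxPi2]
  norm_num
end
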